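/- Let N ≥ 1, R ≥ 1 and k ≥ 2, and let Φ : (Perm(Fin N))^R → (Fin N × (Fin R)^k → Fin N) be the k-hop evaluation map defined by Φ(g)(s, w) = g_w(s). Then every fiber of Φ has cardinality at most N!; that is, for every function O : Fin N × (Fin R)^k → Fin N, the number of tuples g with Φ(g) = O is at most N!. -/

import Mathlib

/-- For a tuple of permutations `g : Fin R → Perm (Fin N)` and a word
`w = (w_1, …, w_k) ∈ (Fin R)^k`, `wordComp g w` is the composition
`g_{w_k} ∘ ⋯ ∘ g_{w_1}` (with `g_{w_1}` applied first). -/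
def wordComp {N R : ℕ} (g : Fin R → Equiv.Perm (Fin N)) {k : ℕ}
    (w : Fin k → Fin R) : Equiv.Perm (Fin N) :=
  (List.ofFn w).foldl (fun σ r => g r * σ) 1

/-- The `k`-hop evaluation map `Φ`, sending a tuple of permutations `g` to the
function `(s, w) ↦ g_w(s)`. -/
def khopEval (N R k : ℕ) (g : Fin R → Equiv.Perm (Fin N)) :
    Fin N × (Fin k → Fin R) → Fin N :=
  fun p => wordComp g p.2 p.1

/-!
A tuple `g` in a fiber of `Φ` is determined by `g 0`: the word `(0, …, 0, r)` of length `k`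
evaluates to `g r * g 0 ^ (k - 1)`, which the fiber prescribes, so `g r` is recovered from `g 0`.
Hence `g ↦ g 0` embeds each fiber into `Perm (Fin N)`.
-/

section

variable {N R : ℕ} (g : Fin R → Equiv.Perm (Fin N))

theorem wordComp_succ {k : ℕ} (w : Fin (k + 1) → Fin R) :
    wordComp g w = g (w (Fin.last k)) * wordComp g (fun i => w i.castSucc) := by
  rw [wordComp, List.ofFn_succ', List.concat_eq_append, List.foldl_append]
  rfl

theorem wordComp_snoc {k : ℕ} (w : Fin k → Fin R) (r : Fin R) :
    wordComp g (Fin.snoc w r : Fin (k + 1) → Fin R) = g r * wordComp g w := by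
  simp only [wordComp_succ, Fin.snoc_last, Fin.snoc_castSucc]

theorem wordComp_const (k : ℕ) (r : Fin R) :
    wordComp g (fun _ : Fin k => r) = g r ^ k := by
  induction k with
  | zero => rfl
  | succ k ih => rw [wordComp_succ, ih, pow_succ']

end

theorem wordComp_eq_of_khopEval_eq {N R k : ℕ} {g g' : Fin R → Equiv.Perm (Fin N)}
    (h : khopEval N R k g = khopEval N R k g') (w : Fin k → Fin R) :
    wordComp g w = wordComp g' w :=
  Equiv.ext fun s => congrFun h (s, w)

theorem eq_of_khopEval_eq_of_apply_eq {N R k : ℕ} (hk : 1 ≤ k)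
    {g g' : Fin R → Equiv.Perm (Fin N)} (h : khopEval N R k g = khopEval N R k g')
    {z : Fin R} (hz : g z = g' z) : g = g' := by
  obtain ⟨m, rfl⟩ : ∃ m, k = m + 1 := ⟨k - 1, by omega⟩
  funext r
  have hw := wordComp_eq_of_khopEval_eq h (Fin.snoc (fun _ => z) r)
  rwa [wordComp_snoc, wordComp_snoc, wordComp_const, wordComp_const, hz,
    mul_left_inj] at hw

theorem khopEval_fiber_card_le_general (N R k : ℕ) (hR : 1 ≤ R)
    (hk : 2 ≤ k) (O : Fin N × (Fin k → Fin R) → Fin N) :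
    Nat.card {g : Fin R → Equiv.Perm (Fin N) // khopEval N R k g = O}
      ≤ Nat.factorial N := by
  let z : Fin R := ⟨0, hR⟩
  calc Nat.card {g : Fin R → Equiv.Perm (Fin N) // khopEval N R k g = O}
      ≤ Nat.card (Equiv.Perm (Fin N)) :=
        Nat.card_le_card_of_injective (fun g => g.1 z) fun g g' hz =>
          Subtype.ext (eq_of_khopEval_eq_of_apply_eq (by omega) (g.2.trans g'.2.symm) hz)
    _ = Nat.factorial N := by simp [Fintype.card_perm]

/-- **Fibers of the k-hop evaluation map are small.** For `N, R ≥ 1` and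
`k ≥ 2`, every fiber of `Φ` has cardinality at most `N!`. -/
theorem khopEval_fiber_card_le (N R k : ℕ) (hN : 1 ≤ N) (hR : 1 ≤ R)
    (hk : 2 ≤ k) (O : Fin N × (Fin k → Fin R) → Fin N) :
    Nat.card {g : Fin R → Equiv.Perm (Fin N) // khopEval N R k g = O}
      ≤ Nat.factorial N :=
  khopEval_fiber_card_le_general N R k hR hk O
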